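/- Let N ≥ 1, ℏ > 0, c, C, k, λ ∈ ℝ, let V : ℝ^N → ℝ and W : I → ℝ be smooth, and let γ be a smooth function on an open interval I ⊆ ℝ with γ' = −cγ² − C. Define the extended Schrödinger operator on smooth functions f(u,q) on I × ℝ^N by Ĥ f = −(ℏ²/2)·(∂²_u f + N·c·γ(u)·∂_u f − k²·γ'(u)·Δ_q f) − k²·γ'(u)·V(q)·f + W(u)·f, where Δ_q is the Laplacian in the variables q ∈ ℝ^N. If ψ : ℝ^N → ℝ is smooth with −(ℏ²/2)Δψ + Vψ = λψ, then for every smooth φ : I → ℝ one has the identity Ĥ(φ·ψ)(u,q) = [−(ℏ²/2)(φ''(u) + N·c·γ(u)·φ'(u)) + (W(u) + c·k²·λ·γ(u)² + C·k²·λ)·φ(u)]·ψ(q). In particular, if ψ is not identically zero, then φ·ψ is an eigenfunction of Ĥ with eigenvalue E if and only if φ is an eigenfunction with eigenvalue E of the one-dimensional operator Ĥ^M φ = −(ℏ²/2)(φ'' + N·c·γ·φ') + M·(c·γ² + C)·φ + W·φ with M = k²λ. -/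
import Mathlib


/-!
Separation property of the quantum extended Hamiltonian on the warped
product I × ℝ^N.
-/

noncomputable section

/-- Partial derivative in `u` of a function on `ℝ × ℝ^N`. -/
def du {N : ℕ} (f : ℝ × (Fin N → ℝ) → ℝ) : ℝ × (Fin N → ℝ) → ℝ :=
  fun x => deriv (fun t => f (t, x.2)) x.1

/-- Partial derivative in `q^i` of a function on `ℝ × ℝ^N`. -/
def dqi {N : ℕ} (i : Fin N) (f : ℝ × (Fin N → ℝ) → ℝ) : ℝ × (Fin N → ℝ) → ℝ :=
  fun x => deriv (fun t => f (x.1, Function.update x.2 i t)) (x.2 i)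

/-- The Laplacian in the variables `q ∈ ℝ^N` of a function on `ℝ × ℝ^N`. -/
def lapq {N : ℕ} (f : ℝ × (Fin N → ℝ) → ℝ) : ℝ × (Fin N → ℝ) → ℝ :=
  fun x => ∑ i : Fin N, dqi i (dqi i f) x

/-- Partial derivative in `q^i` of a function on `ℝ^N`. -/
def pdq {N : ℕ} (i : Fin N) (g : (Fin N → ℝ) → ℝ) : (Fin N → ℝ) → ℝ :=
  fun y => deriv (fun t => g (Function.update y i t)) (y i)

/-- The Laplacian of a function on `ℝ^N`. -/
def lap {N : ℕ} (g : (Fin N → ℝ) → ℝ) : (Fin N → ℝ) → ℝ :=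
  fun y => ∑ i : Fin N, pdq i (pdq i g) y

lemma du_sep {N : ℕ} (φ : ℝ → ℝ) (ψ : (Fin N → ℝ) → ℝ) :
    du (fun x => φ x.1 * ψ x.2) = fun x => deriv φ x.1 * ψ x.2 := by
  funext x
  simp only [du, deriv_mul_const_field]

lemma dqi_sep {N : ℕ} (i : Fin N) (φ : ℝ → ℝ) (ψ : (Fin N → ℝ) → ℝ) :
    dqi i (fun x => φ x.1 * ψ x.2) = fun x => φ x.1 * pdq i ψ x.2 := by
  funext x
  simp only [dqi, pdq, deriv_const_mul_field]

lemma lapq_sep {N : ℕ} (φ : ℝ → ℝ) (ψ : (Fin N → ℝ) → ℝ) (x : ℝ × (Fin N → ℝ)) :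
    lapq (fun x => φ x.1 * ψ x.2) x = φ x.1 * lap ψ x.2 := by
  simp only [lapq, lap, dqi_sep, Finset.mul_sum]

/-- The extended Schrödinger operator
`Ĥf = -(ℏ²/2)(∂²_u f + Ncγ∂_u f - k²γ'Δ_q f) - k²γ'Vf + Wf` acts on separated
functions `φ(u)ψ(q)`, with `ψ` an eigenfunction of `-(ℏ²/2)Δ + V` with eigenvalue `λ`,
through the one-dimensional operator
`Ĥ^M φ = -(ℏ²/2)(φ'' + Ncγφ') + M(cγ² + C)φ + Wφ`, `M = k²λ`. -/
theorem quantum_extension_separation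
    (N : ℕ) (hN : 1 ≤ N) (ℏ : ℝ) (hℏ : 0 < ℏ) (c C k lam : ℝ)
    (V : (Fin N → ℝ) → ℝ) (hV : ContDiff ℝ (⊤ : ℕ∞) V)
    (I : Set ℝ) (hIopen : IsOpen I) (hIconn : I.OrdConnected) (hInonempty : I.Nonempty)
    (W : ℝ → ℝ) (hW : ContDiffOn ℝ (⊤ : ℕ∞) W I)
    (γ : ℝ → ℝ) (hγ : ContDiffOn ℝ (⊤ : ℕ∞) γ I)
    (hode : ∀ u ∈ I, deriv γ u = -c * γ u ^ 2 - C)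
    (Hop : (ℝ × (Fin N → ℝ) → ℝ) → ℝ × (Fin N → ℝ) → ℝ)
    (hHop : ∀ (f : ℝ × (Fin N → ℝ) → ℝ) (x : ℝ × (Fin N → ℝ)),
      Hop f x = -(ℏ ^ 2 / 2) * (du (du f) x + (N : ℝ) * c * γ x.1 * du f x
          - k ^ 2 * deriv γ x.1 * lapq f x)
        - k ^ 2 * deriv γ x.1 * V x.2 * f x + W x.1 * f x)
    (HM : (ℝ → ℝ) → ℝ → ℝ)
    (hHM : ∀ (φ : ℝ → ℝ) (u : ℝ),
      HM φ u = -(ℏ ^ 2 / 2) * (deriv (deriv φ) u + (N : ℝ) * c * γ u * deriv φ u)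
        + (k ^ 2 * lam) * (c * γ u ^ 2 + C) * φ u + W u * φ u)
    (ψ : (Fin N → ℝ) → ℝ) (hψ : ContDiff ℝ (⊤ : ℕ∞) ψ)
    (heig : ∀ y : Fin N → ℝ, -(ℏ ^ 2 / 2) * lap ψ y + V y * ψ y = lam * ψ y) :
    (∀ (φ : ℝ → ℝ), ContDiffOn ℝ (⊤ : ℕ∞) φ I →
      ∀ u ∈ I, ∀ q : Fin N → ℝ,
        Hop (fun x => φ x.1 * ψ x.2) (u, q) =
          (-(ℏ ^ 2 / 2) * (deriv (deriv φ) u + (N : ℝ) * c * γ u * deriv φ u)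
            + (W u + c * k ^ 2 * lam * γ u ^ 2 + C * k ^ 2 * lam) * φ u) * ψ q) ∧
    (∀ (φ : ℝ → ℝ), ContDiffOn ℝ (⊤ : ℕ∞) φ I → ψ ≠ 0 → ∀ E : ℝ,
      ((∀ u ∈ I, ∀ q : Fin N → ℝ,
          Hop (fun x => φ x.1 * ψ x.2) (u, q) = E * (φ u * ψ q)) ↔
        (∀ u ∈ I, HM φ u = E * φ u))) := by

  have key : ∀ (φ : ℝ → ℝ), ∀ u ∈ I, ∀ q : Fin N → ℝ,
      Hop (fun x => φ x.1 * ψ x.2) (u, q) =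
        (-(ℏ ^ 2 / 2) * (deriv (deriv φ) u + (N : ℝ) * c * γ u * deriv φ u)
          + (W u + c * k ^ 2 * lam * γ u ^ 2 + C * k ^ 2 * lam) * φ u) * ψ q := by
    intro φ u hu q
    have h1 : du (fun x : ℝ × (Fin N → ℝ) => φ x.1 * ψ x.2) =
        fun x => deriv φ x.1 * ψ x.2 := du_sep φ ψ
    have h2 : du (du (fun x : ℝ × (Fin N → ℝ) => φ x.1 * ψ x.2)) =
        fun x => deriv (deriv φ) x.1 * ψ x.2 := by rw [h1, du_sep]
    have heig' := heig q
    have hlap : -(ℏ ^ 2 / 2) * lap ψ q = lam * ψ q - V q * ψ q := by linarith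
    rw [hHop, h2, h1, lapq_sep, hode u hu]
    simp only
    linear_combination (k ^ 2 * (c * γ u ^ 2 + C) * φ u) * hlap
  constructor
  · intro φ _ u hu q; exact key φ u hu q
  · intro φ hφ hψ0 E
    constructor
    · intro h u hu
      obtain ⟨q, hq⟩ : ∃ q, ψ q ≠ 0 := by
        by_contra hc
        push_neg at hc
        exact hψ0 (funext hc)
      have := (key φ u hu q).symm.trans (h u hu q)
      have hHMeq : HM φ u =
          -(ℏ ^ 2 / 2) * (deriv (deriv φ) u + (N : ℝ) * c * γ u * deriv φ u)
            + (W u + c * k ^ 2 * lam * γ u ^ 2 + C * k ^ 2 * lam) * φ u := by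
        rw [hHM]; ring
      have h4 := mul_right_cancel₀ hq
        (this.trans (by ring : E * (φ u * ψ q) = (E * φ u) * ψ q))
      rw [hHMeq]; exact h4
    · intro h u hu q
      rw [key φ u hu]
      have hHMeq : HM φ u =
          -(ℏ ^ 2 / 2) * (deriv (deriv φ) u + (N : ℝ) * c * γ u * deriv φ u)
            + (W u + c * k ^ 2 * lam * γ u ^ 2 + C * k ^ 2 * lam) * φ u := by
        rw [hHM]; ring
      rw [← hHMeq, h u hu]; ring
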